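/- For every ε ∈ ℂ with ε ≠ 0, the space a(ε) is a Lie subalgebra of ⨁_{b∈ℤ/nℤ} gl_n(O), and the projection onto the component b = 0 restricts to a Lie algebra isomorphism from a(ε) onto gl_n(O). -/

import Mathlib

/-- The ring `O = ℂ[[z]]` of formal power series. -/
noncomputable abbrev O : Type := PowerSeries ℂ

/-- The element `z + ε` of `O`. -/
noncomputable def zPlus (ε : ℂ) : O := PowerSeries.X + PowerSeries.C ε

/-- Index type for the `n²` generators: `n` diagonal ones, and an upper and a lower one
for each pair `i < j`. -/
abbrev GenIdx (n : ℕ) : Type :=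
  Fin n ⊕ ({p : Fin n × Fin n // p.1 < p.2} ⊕ {p : Fin n × Fin n // p.1 < p.2})

/-- The generators `d_i`, `u_{i,j}(ε)`, `l_{i,j}(ε)` of `a(ε)`.  Indices are 0-based:
the 1-based condition `i ≤ b ≤ j-1` for `1 ≤ i < j ≤ n`, `b ∈ {0,…,n-1}` reads
`i < b ∧ b ≤ j` in 0-based row/column indices `i < j`. -/
noncomputable def gen (n : ℕ) (ε : ℂ) : GenIdx n → (Fin n → Matrix (Fin n) (Fin n) O)
  | Sum.inl i => fun _ => Matrix.single i i 1
  | Sum.inr (Sum.inl ⟨(i, j), _⟩) => fun b =>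
      if i.val < b.val ∧ b.val ≤ j.val then Matrix.single i j (zPlus ε)
      else Matrix.single i j 1
  | Sum.inr (Sum.inr ⟨(i, j), _⟩) => fun b =>
      if i.val < b.val ∧ b.val ≤ j.val then Matrix.single j i 1
      else Matrix.single j i (zPlus ε)

/-- The `O`-submodule `a(ε)` of `⨁_{b ∈ ℤ/nℤ} gl_n(O)`. -/
noncomputable def aEps (n : ℕ) (ε : ℂ) : Submodule O (Fin n → Matrix (Fin n) (Fin n) O) :=
  Submodule.span O (Set.range (gen n ε))


/-!
With `D_b = diag(z+ε, …, z+ε, 1, …, 1)` (`b` entries `z+ε`), conjugation by `D_b` scales `E_{i,j}`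
by `z+ε` and `E_{j,i}` by `(z+ε)⁻¹` (for `i < j`) exactly when `i ≤ b ≤ j-1`. Hence for `ε ≠ 0`,
where `D_b` is invertible, `d_i`, `u_{i,j}`, `l_{i,j}` are the images of `E_{i,i}`, `E_{i,j}`,
`(z+ε) E_{j,i}` under the algebra homomorphism `M ↦ (D_b M D_b⁻¹)_b`, and `a(ε)` is its image.
An image of an algebra homomorphism is closed under commutators, and `D_0 = 1`, so the projection
to `b = 0` inverts it.
-/

open Matrix

section DiagConj

variable {R ι : Type*} [CommRing R] [Fintype ι] [DecidableEq ι]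

noncomputable def diagConj (d : ι → Rˣ) : Matrix ι ι R →ₐ[R] Matrix ι ι R :=
  MulSemiringAction.toAlgHom R _
    (ConjAct.toConjAct (Units.map (diagonalRingHom ι R).toMonoidHom (MulEquiv.piUnits.symm d)))

theorem diagConj_apply (d : ι → Rˣ) (M : Matrix ι ι R) (i j : ι) :
    diagConj d M i j = d i * M i j * ↑(d j)⁻¹ := by
  simp [diagConj, ConjAct.units_smul_def, diagonal_mul, mul_diagonal, MulEquiv.piUnits]

theorem diagConj_single (d : ι → Rˣ) (i j : ι) (c : R) :
    diagConj d (single i j c) = single i j (d i * c * ↑(d j)⁻¹) := by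
  ext p q
  rw [diagConj_apply]
  by_cases h : i = p ∧ j = q
  · obtain ⟨rfl, rfl⟩ := h; simp
  · simp [h]

end DiagConj

section StepConj

variable {R : Type*} [CommRing R] {n : ℕ}

def stepWeight (u : Rˣ) (b : Fin n) : Fin n → Rˣ := fun p => if p.val < b.val then u else 1

theorem stepWeight_mul_inv {u : Rˣ} {i j : Fin n} (h : i ≤ j) (b : Fin n) :
    stepWeight u b i * (stepWeight u b j)⁻¹ =
      if i.val < b.val ∧ b.val ≤ j.val then u else 1 := by
  have : i.val ≤ j.val := h
  unfold stepWeight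
  split_ifs <;> first | omega | simp

noncomputable def stepConj (u : Rˣ) :
    Matrix (Fin n) (Fin n) R →ₐ[R] (Fin n → Matrix (Fin n) (Fin n) R) :=
  AlgHom.pi fun b => diagConj (stepWeight u b)

theorem stepConj_apply_zero [NeZero n] (u : Rˣ) (M : Matrix (Fin n) (Fin n) R) :
    stepConj u M 0 = M := by
  ext p q
  simp [stepConj, diagConj_apply, stepWeight]

theorem stepConj_single_of_le (u : Rˣ) {i j : Fin n} (h : i ≤ j) (c : R) :
    stepConj u (single i j c) = fun b =>
      if i.val < b.val ∧ b.val ≤ j.val then single i j (u * c) else single i j c := by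
  funext b
  simp only [stepConj, AlgHom.pi_apply, diagConj_single]
  rw [mul_right_comm, ← Units.val_mul, stepWeight_mul_inv h]
  split_ifs <;> simp [mul_comm]

theorem stepConj_single_of_ge (u : Rˣ) {i j : Fin n} (h : j ≤ i) (c : R) :
    stepConj u (single i j c) = fun b =>
      if j.val < b.val ∧ b.val ≤ i.val then single i j (↑u⁻¹ * c) else single i j c := by
  funext b
  simp only [stepConj, AlgHom.pi_apply, diagConj_single]
  rw [mul_right_comm, ← Units.val_mul,
    show stepWeight u b i * (stepWeight u b j)⁻¹
      = (stepWeight u b j * (stepWeight u b i)⁻¹)⁻¹ by group,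
    stepWeight_mul_inv h]
  split_ifs <;> simp [mul_comm]

end StepConj

theorem isUnit_zPlus {ε : ℂ} (hε : ε ≠ 0) : IsUnit (zPlus ε) := by
  rw [PowerSeries.isUnit_iff_constantCoeff]
  simpa [zPlus] using hε

theorem gen_diag_eq {n : ℕ} (ε : ℂ) (u : Oˣ) (i : Fin n) :
    gen n ε (.inl i) = stepConj u (single i i 1) := by
  rw [stepConj_single_of_le u le_rfl]
  funext b
  simp [gen]

theorem gen_upper_eq {n : ℕ} {ε : ℂ} {u : Oˣ} (hu : (u : O) = zPlus ε) {i j : Fin n}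
    (h : i < j) :
    gen n ε (.inr (.inl ⟨(i, j), h⟩)) = stepConj u (single i j 1) := by
  rw [stepConj_single_of_le u h.le]
  funext b
  simp [gen, hu]

theorem gen_lower_eq {n : ℕ} {ε : ℂ} {u : Oˣ} (hu : (u : O) = zPlus ε) {i j : Fin n}
    (h : i < j) :
    gen n ε (.inr (.inr ⟨(i, j), h⟩)) = stepConj u (single j i (zPlus ε)) := by
  rw [stepConj_single_of_ge u h.le]
  funext b
  simp [gen, ← hu]

theorem stepConj_single_mem_aEps {ε : ℂ} {u : Oˣ} (hu : (u : O) = zPlus ε) {n : ℕ}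
    (p q : Fin n) : stepConj u (single p q 1) ∈ aEps n ε := by
  rcases lt_trichotomy p q with h | rfl | h
  · rw [← gen_upper_eq hu h]
    exact Submodule.subset_span ⟨_, rfl⟩
  · rw [← gen_diag_eq ε u]
    exact Submodule.subset_span ⟨_, rfl⟩
  · have : single p q (1 : O) = (↑u⁻¹ : O) • single p q (zPlus ε) := by
      rw [smul_single, smul_eq_mul, ← hu, Units.inv_mul]
    rw [this, map_smul, ← gen_lower_eq hu h]
    exact Submodule.smul_mem _ _ (Submodule.subset_span ⟨_, rfl⟩)

theorem aEps_eq_range_stepConj {ε : ℂ} {u : Oˣ} (hu : (u : O) = zPlus ε) (n : ℕ) :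
    aEps n ε = LinearMap.range (stepConj (n := n) u).toLinearMap := by
  apply le_antisymm
  · refine Submodule.span_le.mpr ?_
    rintro _ ⟨g, rfl⟩
    rcases g with i | ⟨⟨i, j⟩, h⟩ | ⟨⟨i, j⟩, h⟩
    · exact ⟨_, (gen_diag_eq ε u i).symm⟩
    · exact ⟨_, (gen_upper_eq hu h).symm⟩
    · exact ⟨_, (gen_lower_eq hu h).symm⟩
  · rw [LinearMap.range_eq_map, ← (stdBasis O (Fin n) (Fin n)).span_eq, Submodule.map_span,
      Submodule.span_le]
    rintro _ ⟨_, ⟨⟨p, q⟩, rfl⟩, rfl⟩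
    rw [stdBasis_eq_single]
    exact stepConj_single_mem_aEps hu p q

theorem statement3_general (n : ℕ) [NeZero n] (ε : ℂ) (hε : ε ≠ 0) :
    (∀ A ∈ aEps n ε, ∀ B ∈ aEps n ε,
        (fun b => A b * B b - B b * A b) ∈ aEps n ε) ∧
    Set.InjOn (fun A : Fin n → Matrix (Fin n) (Fin n) O => A 0) (aEps n ε : Set _) ∧
    (fun A : Fin n → Matrix (Fin n) (Fin n) O => A 0) '' (aEps n ε : Set _)
      = Set.univ := by
  obtain ⟨u, hu⟩ := isUnit_zPlus hε
  rw [aEps_eq_range_stepConj hu]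
  refine ⟨?_, ?_, ?_⟩
  · rintro _ ⟨M, rfl⟩ _ ⟨N, rfl⟩
    exact ⟨M * N - N * M, by simp only [AlgHom.toLinearMap_apply, map_sub, map_mul]; rfl⟩
  · rintro _ ⟨M, rfl⟩ _ ⟨N, rfl⟩ h
    simp only [AlgHom.toLinearMap_apply, stepConj_apply_zero] at h
    rw [h]
  · exact Set.eq_univ_of_forall fun M => ⟨stepConj u M, ⟨M, rfl⟩, stepConj_apply_zero u M⟩

/-- for `ε ≠ 0` the space `a(ε)` is a Lie subalgebra of
`⨁_{b ∈ ℤ/nℤ} gl_n(O)` (an `O`-submodule closed under the componentwise commutator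
bracket), and the projection onto the component `b = 0` (which automatically preserves
the bracket) restricts to a bijection from `a(ε)` onto all of `gl_n(O)`, i.e. a Lie
algebra isomorphism `a(ε) ≅ gl_n(O)`. -/
theorem statement3 (n : ℕ) [NeZero n] (hn : 2 ≤ n) (ε : ℂ) (hε : ε ≠ 0) :
    (∀ A ∈ aEps n ε, ∀ B ∈ aEps n ε,
        (fun b => A b * B b - B b * A b) ∈ aEps n ε) ∧
    Set.InjOn (fun A : Fin n → Matrix (Fin n) (Fin n) O => A 0) (aEps n ε : Set _) ∧
    (fun A : Fin n → Matrix (Fin n) (Fin n) O => A 0) '' (aEps n ε : Set _)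
      = Set.univ :=
  statement3_general n ε hε
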